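/- Let (u, I, x̄) solve the system R(x̄(t), I(t)) = 0 on [0,T], with x̄ differentiable and R C¹ satisfying ∂_I R ≤ -K̄₂ < 0 and ∇_x R(x̄(t), I(t)) = -D²u(t,x̄(t)) ẋ̄(t) where D²u(t,x̄(t)) ≤ -2L̄₁·Id. If moreover ẋ̄(t) = (-D²u(t,x̄(t)))⁻¹ ∇_x R(x̄(t), I(t)), then I is nondecreasing on [0,T]. -/

import Mathlib

open Set Filter Topology Function
open scoped InnerProductSpace

/-!
Differentiating `R (x̄ t) (I t) = 0` gives `⟪∇ₓR, x̄'⟫ + I' ∂_I R = 0`. The ODE and the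
negativity of the Hessian make `⟪∇ₓR, x̄'⟫ = -⟪D²u x̄', x̄'⟫ ≥ 0`, and `∂_I R < 0`,
so `I' ≥ 0`.
-/

section

variable {E : Type*} [NormedAddCommGroup E] [InnerProductSpace ℝ E] [CompleteSpace E]
  {f : E → ℝ → ℝ}

theorem HasFDerivAt.uncurry_apply_eq_inner_gradient_add {F : E × ℝ →L[ℝ] ℝ} {x : E} {J : ℝ}
    (hF : HasFDerivAt (uncurry f) F (x, J)) (v : E) (s : ℝ) :
    F (v, s) = ⟪gradient (f · J) x, v⟫_ℝ + s * deriv (f x) J := by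
  have hx : HasFDerivAt (f · J) (F.comp (ContinuousLinearMap.inl ℝ E ℝ)) x := by
    exact hF.comp x (hasFDerivAt_prodMk_left (𝕜 := ℝ) x J)
  have hJ : HasDerivAt (f x) (F (0, 1)) J :=
    hF.comp_hasDerivAt J ((hasDerivAt_const J x).prodMk (hasDerivAt_id J))
  have hsplit : (v, s) = (v, (0 : ℝ)) + s • ((0 : E), (1 : ℝ)) := by simp
  rw [gradient, InnerProductSpace.toDual_symm_apply, hx.fderiv, hJ.deriv, hsplit, map_add,
    map_smul, smul_eq_mul]
  simp

theorem hasDerivAt_uncurry_comp {γ : ℝ → E} {γ' : E} {I : ℝ → ℝ} {I' t : ℝ}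
    (hf : DifferentiableAt ℝ (uncurry f) (γ t, I t)) (hγ : HasDerivAt γ γ' t)
    (hI : HasDerivAt I I' t) :
    HasDerivAt (fun s => f (γ s) (I s))
      (⟪gradient (f · (I t)) (γ t), γ'⟫_ℝ + I' * deriv (f (γ t)) (I t)) t := by
  have h := hf.hasFDerivAt.comp_hasDerivAt t (hγ.prodMk hI)
  rwa [hf.hasFDerivAt.uncurry_apply_eq_inner_gradient_add] at h

theorem nonneg_of_eventually_eq_zero_of_inner_gradient_nonneg {γ : ℝ → E} {γ' : E}
    {I : ℝ → ℝ} {I' t : ℝ} (hf : DifferentiableAt ℝ (uncurry f) (γ t, I t))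
    (hγ : HasDerivAt γ γ' t) (hI : HasDerivAt I I' t)
    (hzero : ∀ᶠ s in 𝓝 t, f (γ s) (I s) = 0)
    (hx : 0 ≤ ⟪gradient (f · (I t)) (γ t), γ'⟫_ℝ) (hJ : deriv (f (γ t)) (I t) < 0) :
    0 ≤ I' := by
  have hsum : ⟪gradient (f · (I t)) (γ t), γ'⟫_ℝ + I' * deriv (f (γ t)) (I t) = 0 :=
    (hasDerivAt_uncurry_comp hf hγ hI).unique ((hasDerivAt_const t 0).congr_of_eventuallyEq hzero)
  nlinarith

end

theorem stmt5_general (d : ℕ) (T : ℝ)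
    (R : EuclideanSpace ℝ (Fin d) → ℝ → ℝ)
    (hRC1 : ContDiff ℝ 1 fun p : EuclideanSpace ℝ (Fin d) × ℝ => R p.1 p.2)
    (K₂ : ℝ) (hK₂ : 0 < K₂)
    (hRI : ∀ x J, deriv (R x) J ≤ -K₂)
    (L₁ : ℝ) (hL₁ : 0 < L₁)
    (u : ℝ → EuclideanSpace ℝ (Fin d) → ℝ)
    (xbar : ℝ → EuclideanSpace ℝ (Fin d)) (xbar' : ℝ → EuclideanSpace ℝ (Fin d))
    (I : ℝ → ℝ) (I' : ℝ → ℝ)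
    (hHess : ∀ t ∈ Icc (0 : ℝ) T, ∀ v : EuclideanSpace ℝ (Fin d),
      inner (𝕜 := ℝ) (fderiv ℝ (gradient (u t)) (xbar t) v) v ≤ -2 * L₁ * ‖v‖ ^ 2)
    (hxbar : ∀ t ∈ Icc (0 : ℝ) T, HasDerivAt xbar (xbar' t) t)
    (hODE : ∀ t ∈ Icc (0 : ℝ) T,
      (fderiv ℝ (gradient (u t)) (xbar t)) (xbar' t)
        = - gradient (fun x => R x (I t)) (xbar t))
    (hIdiff : ∀ t ∈ Icc (0 : ℝ) T, HasDerivAt I (I' t) t)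
    (hzero : ∀ t ∈ Icc (0 : ℝ) T, R (xbar t) (I t) = 0) :
    MonotoneOn I (Icc (0 : ℝ) T) := by
  refine monotoneOn_of_hasDerivWithinAt_nonneg (convex_Icc 0 T)
    (fun t ht => (hIdiff t ht).continuousAt.continuousWithinAt)
    (fun t ht => (hIdiff t (interior_subset ht)).hasDerivWithinAt) fun t ht => ?_
  have ht' := interior_subset ht
  have hgrad : 0 ≤ ⟪gradient (R · (I t)) (xbar t), xbar' t⟫_ℝ := by
    have h := hHess t ht' (xbar' t)
    rw [hODE t ht', inner_neg_left] at h
    nlinarith [sq_nonneg ‖xbar' t‖]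
  exact nonneg_of_eventually_eq_zero_of_inner_gradient_nonneg
    ((hRC1.differentiable one_ne_zero) _) (hxbar t ht') (hIdiff t ht')
    (eventually_of_mem (mem_interior_iff_mem_nhds.mp ht) hzero) hgrad
    ((hRI _ _).trans_lt (neg_lt_zero.mpr hK₂))

/-- Lemma 4.1: along a solution of the system, with
`ẋ̄(t) = (-D²u(t,x̄(t)))⁻¹ ∇_x R(x̄(t),I(t))` (written implicitly as
`D²u(t,x̄(t)) ẋ̄(t) = -∇_x R(x̄(t),I(t))`), `D²u ≤ -2L̄₁ Id`, `∂_I R ≤ -K̄₂ < 0`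
and `R(x̄(t),I(t)) = 0`, the function `I` is nondecreasing. -/
theorem stmt5 (d : ℕ) (T : ℝ) (hT : 0 < T)
    (R : EuclideanSpace ℝ (Fin d) → ℝ → ℝ)
    (hRC1 : ContDiff ℝ 1 fun p : EuclideanSpace ℝ (Fin d) × ℝ => R p.1 p.2)
    (K₂ : ℝ) (hK₂ : 0 < K₂)
    (hRI : ∀ x J, deriv (R x) J ≤ -K₂)
    (L₁ : ℝ) (hL₁ : 0 < L₁)
    (u : ℝ → EuclideanSpace ℝ (Fin d) → ℝ) (hu : ∀ t, ContDiff ℝ 2 (u t))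
    (xbar : ℝ → EuclideanSpace ℝ (Fin d)) (xbar' : ℝ → EuclideanSpace ℝ (Fin d))
    (I : ℝ → ℝ) (I' : ℝ → ℝ)
    (hHess : ∀ t ∈ Icc (0 : ℝ) T, ∀ v : EuclideanSpace ℝ (Fin d),
      inner (𝕜 := ℝ) (fderiv ℝ (gradient (u t)) (xbar t) v) v ≤ -2 * L₁ * ‖v‖ ^ 2)
    (hxbar : ∀ t ∈ Icc (0 : ℝ) T, HasDerivAt xbar (xbar' t) t)
    (hODE : ∀ t ∈ Icc (0 : ℝ) T,
      (fderiv ℝ (gradient (u t)) (xbar t)) (xbar' t)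
        = - gradient (fun x => R x (I t)) (xbar t))
    (hIdiff : ∀ t ∈ Icc (0 : ℝ) T, HasDerivAt I (I' t) t)
    (hzero : ∀ t ∈ Icc (0 : ℝ) T, R (xbar t) (I t) = 0) :
    MonotoneOn I (Icc (0 : ℝ) T) :=
  stmt5_general d T R hRC1 K₂ hK₂ hRI L₁ hL₁ u xbar xbar' I I' hHess hxbar hODE hIdiff hzero
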